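/- There is a universal constant c > 0 such that the following holds. Let f : {−1,1}^n → [0,1] satisfy w₁(f) = ε² and Var(f) = σ² > 0. Then there exists a half-space B ⊆ {−1,1}^n with Cov(f, 1_B) ≥ c ε²/σ. -/
import Mathlib


open Real

/-- The `±1` value of a boolean coordinate. -/
noncomputable def bval (b : Bool) : ℝ := if b then 1 else -1

/-- Expectation with respect to the uniform measure on the discrete cube `{-1,1}^n`. -/
noncomputable def bExp (n : ℕ) (f : (Fin n → Bool) → ℝ) : ℝ :=
  (∑ x : Fin n → Bool, f x) / 2 ^ n

/-- Covariance on the discrete cube. -/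
noncomputable def bCov (n : ℕ) (f g : (Fin n → Bool) → ℝ) : ℝ :=
  bExp n (fun x => (f x - bExp n f) * (g x - bExp n g))

/-- Variance on the discrete cube. -/
noncomputable def bVar (n : ℕ) (f : (Fin n → Bool) → ℝ) : ℝ := bCov n f f

/-- The character `χ_S(x) = ∏_{i ∈ S} x_i`. -/
noncomputable def chi (n : ℕ) (S : Finset (Fin n)) (x : Fin n → Bool) : ℝ :=
  ∏ i ∈ S, bval (x i)

/-- The Fourier coefficient `f̂(S) = E[f χ_S]`. -/
noncomputable def fourierCoef (n : ℕ) (f : (Fin n → Bool) → ℝ) (S : Finset (Fin n)) : ℝ :=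
  bExp n (fun x => f x * chi n S x)

/-- The Bonami--Beckner semigroup `P_t f = Σ_S e^{-t|S|} f̂(S) χ_S`. -/
noncomputable def bP (n : ℕ) (t : ℝ) (f : (Fin n → Bool) → ℝ) : (Fin n → Bool) → ℝ :=
  fun x => ∑ S : Finset (Fin n), Real.exp (-t * S.card) * fourierCoef n f S * chi n S x

/-- A half-space `{x : ⟨a, x⟩ ≤ b}` in `{-1,1}^n`. -/
def IsHalfspaceB {n : ℕ} (A : Set (Fin n → Bool)) : Prop :=
  ∃ (a : Fin n → ℝ) (b : ℝ), A = {x | ∑ i, a i * bval (x i) ≤ b}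

/-- `M(g)`: the supremum over half-spaces `A` of `Cov(g, 1_A)`. -/
noncomputable def Mb (n : ℕ) (g : (Fin n → Bool) → ℝ) : ℝ :=
  ⨆ A : {A : Set (Fin n → Bool) // IsHalfspaceB A}, bCov n g (Set.indicator A.1 1)

/-- `z ⊘ x`: coordinates where `z` is `none` (i.e. 0) are filled in by `x`. -/
def oslash {n : ℕ} (z : Fin n → Option Bool) (x : Fin n → Bool) : Fin n → Bool :=
  fun i => (z i).getD (x i)

/-- The restriction `f_z(x) = f(z ⊘ x)`. -/
noncomputable def restrictF {n : ℕ} (f : (Fin n → Bool) → ℝ) (z : Fin n → Option Bool) :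
    (Fin n → Bool) → ℝ := fun x => f (oslash z x)

/-- The `μ_s`-probability of the restriction pattern `z ∈ {-1,0,1}^n`: each coordinate is
independently `0` (here `none`) with probability `e^{-s}`, and `±1` with probability
`(1-e^{-s})/2` each. -/
noncomputable def muWeight (n : ℕ) (s : ℝ) (z : Fin n → Option Bool) : ℝ :=
  ∏ i, if z i = none then Real.exp (-s) else (1 - Real.exp (-s)) / 2

/-- Expectation over a random restriction `Z ∼ μ_s`. -/
noncomputable def restExp (n : ℕ) (s : ℝ) (g : (Fin n → Option Bool) → ℝ) : ℝ :=
  ∑ z : Fin n → Option Bool, muWeight n s z * g z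

/-- `w₁(f) = Σ_i f̂({i})²`. -/
noncomputable def w1b (n : ℕ) (f : (Fin n → Bool) → ℝ) : ℝ :=
  ∑ i : Fin n, (fourierCoef n f {i}) ^ 2

/-- The boolean version of the ball example: `n = m²`, the coordinates are split into `m`
consecutive blocks `J_i = {j : j / m = i}` of size `m`, and
`B^{(m)} = {x : Σ_i (m^{-1/2} Σ_{j ∈ J_i} x_j)² ≤ m}`. -/
noncomputable def Bm (m : ℕ) : Set (Fin (m*m) → Bool) :=
  {x | ∑ i : Fin m,
    ((∑ j : Fin (m*m), if (j : ℕ) / m = (i : ℕ) then bval (x j) else 0) / Real.sqrt m) ^ 2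
      ≤ (m : ℝ)}



lemma bval_sq (b : Bool) : bval b ^ 2 = 1 := by cases b <;> norm_num [bval]

lemma bval_not (b : Bool) : bval (!b) = - bval b := by cases b <;> norm_num [bval]

lemma card_cube (n : ℕ) : (∑ _x : Fin n → Bool, (1:ℝ)) = 2 ^ n := by
  simp [Finset.card_univ]

lemma bExp_add (n : ℕ) (g h : (Fin n → Bool) → ℝ) :
    bExp n (fun x => g x + h x) = bExp n g + bExp n h := by
  simp [bExp, Finset.sum_add_distrib, add_div]

lemma bExp_sub (n : ℕ) (g h : (Fin n → Bool) → ℝ) :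
    bExp n (fun x => g x - h x) = bExp n g - bExp n h := by
  simp [bExp, Finset.sum_sub_distrib, sub_div]

lemma bExp_const (n : ℕ) (c : ℝ) : bExp n (fun _ => c) = c := by
  rw [bExp, Finset.sum_const]
  simp [Finset.card_univ]

lemma bExp_const_mul (n : ℕ) (c : ℝ) (g : (Fin n → Bool) → ℝ) :
    bExp n (fun x => c * g x) = c * bExp n g := by
  simp [bExp, ← Finset.mul_sum, mul_div_assoc]

lemma bExp_finset_sum (n : ℕ) {ι : Type*} (s : Finset ι) (F : ι → (Fin n → Bool) → ℝ) :
    bExp n (fun x => ∑ i ∈ s, F i x) = ∑ i ∈ s, bExp n (F i) := by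
  rw [bExp, Finset.sum_comm, Finset.sum_div]
  rfl

lemma bExp_mono (n : ℕ) {g h : (Fin n → Bool) → ℝ} (hle : ∀ x, g x ≤ h x) :
    bExp n g ≤ bExp n h := by
  apply div_le_div_of_nonneg_right ?_ (by positivity)
  · exact Finset.sum_le_sum fun x _ => hle x

lemma bCov_eq (n : ℕ) (f g : (Fin n → Bool) → ℝ) :
    bCov n f g = bExp n (fun x => (f x - bExp n f) * g x) := by
  have : ∀ x, (f x - bExp n f) * (g x - bExp n g)
      = (f x - bExp n f) * g x - (bExp n g * f x - (bExp n g * bExp n f)) := by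
    intro x; ring
  rw [bCov]
  simp_rw [this]
  rw [bExp_sub, bExp_sub, bExp_const_mul, bExp_const]
  ring

lemma sum_const_cube {n : ℕ} (c : ℝ) : ∑ _x : Fin n → Bool, c = 2 ^ n * c := by
  rw [Finset.sum_const]
  simp [Finset.card_univ]

lemma flip_involutive {n : ℕ} (i : Fin n) :
    Function.Involutive (fun x : Fin n → Bool => Function.update x i (!(x i))) := by
  intro x
  ext j
  rcases eq_or_ne j i with rfl | h
  · simp
  · simp [Function.update_of_ne h]

lemma sum_parity {n : ℕ} (a : Fin n → ℝ) (S : Finset (Fin n)) (m : ℕ) (i : Fin n)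
    (hi : i ∉ S) :
    ∑ x : Fin n → Bool, (∑ j ∈ S, a j * bval (x j)) ^ m * bval (x i) = 0 := by
  set F : (Fin n → Bool) → ℝ := fun x => (∑ j ∈ S, a j * bval (x j)) ^ m * bval (x i) with hF
  set σ : (Fin n → Bool) → (Fin n → Bool) := fun x => Function.update x i (!(x i)) with hσ
  have hbij : Function.Bijective σ := (flip_involutive i).bijective
  have key : ∀ x, F (σ x) = - F x := by
    intro x
    have h1 : ∀ j ∈ S, a j * bval (σ x j) = a j * bval (x j) := by
      intro j hj
      have : j ≠ i := fun h => hi (h ▸ hj)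
      simp [hσ, Function.update_of_ne this]
    have h2 : bval (σ x i) = - bval (x i) := by
      simp [hσ, bval_not]
    rw [hF]
    simp only
    rw [Finset.sum_congr rfl h1, h2]
    ring
  have := hbij.sum_comp F
  have h2 : ∑ x : Fin n → Bool, F (σ x) = ∑ x : Fin n → Bool, - F x :=
    Finset.sum_congr rfl fun x _ => key x
  rw [h2, Finset.sum_neg_distrib] at this
  linarith

lemma sq_moment {n : ℕ} (a : Fin n → ℝ) (S : Finset (Fin n)) :
    ∑ x : Fin n → Bool, (∑ j ∈ S, a j * bval (x j)) ^ 2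
      = 2 ^ n * ∑ j ∈ S, a j ^ 2 := by
  induction S using Finset.induction_on with
  | empty => simp
  | @insert i S hi ih =>
    have expand : ∀ x : Fin n → Bool,
        (∑ j ∈ insert i S, a j * bval (x j)) ^ 2
        = (∑ j ∈ S, a j * bval (x j)) ^ 2
          + (2 * a i) * ((∑ j ∈ S, a j * bval (x j)) ^ 1 * bval (x i)) + a i ^ 2 := by
      intro x
      rw [Finset.sum_insert hi]
      have h2 := bval_sq (x i)
      linear_combination (a i ^ 2) * h2
    rw [Finset.sum_congr rfl fun x _ => expand x]
    rw [Finset.sum_add_distrib, Finset.sum_add_distrib, ← Finset.mul_sum,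
      sum_parity a S 1 i hi, ih, sum_const_cube, Finset.sum_insert hi]
    ring

lemma quad_moment {n : ℕ} (a : Fin n → ℝ) (S : Finset (Fin n)) :
    ∑ x : Fin n → Bool, (∑ j ∈ S, a j * bval (x j)) ^ 4
      ≤ 2 ^ n * (3 * (∑ j ∈ S, a j ^ 2) ^ 2) := by
  induction S using Finset.induction_on with
  | empty => simp
  | @insert i S hi ih =>
    have expand : ∀ x : Fin n → Bool,
        (∑ j ∈ insert i S, a j * bval (x j)) ^ 4
        = (∑ j ∈ S, a j * bval (x j)) ^ 4
          + (4 * a i) * ((∑ j ∈ S, a j * bval (x j)) ^ 3 * bval (x i))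
          + (6 * a i ^ 2) * (∑ j ∈ S, a j * bval (x j)) ^ 2
          + (4 * a i ^ 3) * ((∑ j ∈ S, a j * bval (x j)) ^ 1 * bval (x i))
          + a i ^ 4 := by
      intro x
      rw [Finset.sum_insert hi]
      have h2 := bval_sq (x i)
      linear_combination (6 * (∑ j ∈ S, a j * bval (x j)) ^ 2 * a i ^ 2
        + 4 * (∑ j ∈ S, a j * bval (x j)) * a i ^ 3 * bval (x i)
        + a i ^ 4 * (bval (x i) ^ 2 + 1)) * h2
    rw [Finset.sum_congr rfl fun x _ => expand x]
    simp only [Finset.sum_add_distrib, ← Finset.mul_sum]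
    rw [sum_parity a S 3 i hi, sum_parity a S 1 i hi, sq_moment, sum_const_cube,
      Finset.sum_insert hi]
    have h2n : (0:ℝ) < 2 ^ n := by positivity
    nlinarith [ih, mul_nonneg h2n.le (sq_nonneg (a i ^ 2)), mul_nonneg h2n.le (sq_nonneg (a i ^ 2 - ∑ j ∈ S, a j ^ 2))]

lemma bExp_CS (n : ℕ) (u v : (Fin n → Bool) → ℝ) :
    (bExp n (fun x => u x * v x)) ^ 2
      ≤ bExp n (fun x => u x ^ 2) * bExp n (fun x => v x ^ 2) := by
  have h := Finset.sum_mul_sq_le_sq_mul_sq Finset.univ u v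
  rw [bExp, bExp, bExp, div_pow, div_mul_div_comm]
  have h2 : ((2:ℝ) ^ n) ^ 2 = 2 ^ n * 2 ^ n := by ring
  rw [h2]
  apply div_le_div_of_nonneg_right h (by positivity)

lemma clamp_err {M u : ℝ} (hM : 0 < M) :
    (u - max (-M) (min u M)) ^ 2 ≤ u ^ 4 / M ^ 2 := by
  rw [div_eq_inv_mul, le_inv_mul_iff₀ (by positivity)]
  rcases le_total u (-M) with h1 | h1
  · rw [min_eq_left (by linarith), max_eq_left (by linarith)]
    have hA : 0 ≤ u^2 + M*u + M^2 := by nlinarith [sq_nonneg (u + M/2), sq_nonneg M]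
    have hB : 0 ≤ u^2 - M*u - M^2 := by
      have h := mul_nonneg hM.le (by linarith : (0:ℝ) ≤ -u - M)
      nlinarith [sq_nonneg u]
    nlinarith [mul_nonneg hA hB]
  · rcases le_total u M with h2 | h2
    · rw [min_eq_left h2, max_eq_right h1]
      nlinarith [sq_nonneg (u^2)]
    · rw [min_eq_right h2, max_eq_right (by linarith)]
      have hA : 0 ≤ u^2 - M*u + M^2 := by nlinarith [sq_nonneg (u - M/2), sq_nonneg M]
      have hB : 0 ≤ u^2 + M*u - M^2 := by
        have h := mul_nonneg hM.le (by linarith : (0:ℝ) ≤ u - M)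
        nlinarith [sq_nonneg u]
      nlinarith [mul_nonneg hA hB]

lemma step_antitone (L : ℝ) : Antitone (fun t : ℝ => if t ≤ L then (1:ℝ) else 0) := by
  intro s t hst
  by_cases h : t ≤ L
  · simp [h, if_pos (le_trans hst h)]
  · simp only [if_neg h]
    split_ifs <;> norm_num

lemma step_integral {M L : ℝ} (hM : 0 < M) :
    ∫ t in (-M)..M, (if t ≤ L then (1:ℝ) else 0) = max (-M) (min L M) + M := by
  by_cases hLM : M ≤ L
  · rw [intervalIntegral.integral_congr (g := fun _ => (1:ℝ))
      (fun t ht => ?_), intervalIntegral.integral_const]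
    · rw [min_eq_right hLM, max_eq_right (by linarith)]
      simp
      try ring
    · rw [Set.uIcc_of_le (by linarith)] at ht
      exact if_pos (le_trans ht.2 hLM)
  · push_neg at hLM
    by_cases hL : L < -M
    · rw [intervalIntegral.integral_congr (g := fun _ => (0:ℝ))
        (fun t ht => ?_), intervalIntegral.integral_const]
      · rw [min_eq_left (by linarith), max_eq_left (by linarith)]
        simp
      · rw [Set.uIcc_of_le (by linarith)] at ht
        exact if_neg (by push_neg; linarith [ht.1])
    · push_neg at hL
      have hsplit := intervalIntegral.integral_add_adjacent_intervals (μ := MeasureTheory.volume)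
        (a := -M) (b := L) (c := M) (f := fun t => if t ≤ L then (1:ℝ) else 0)
        ((step_antitone L).intervalIntegrable) ((step_antitone L).intervalIntegrable)
      have hfst : ∫ t in (-M)..L, (if t ≤ L then (1:ℝ) else 0) = L + M := by
        rw [intervalIntegral.integral_congr (g := fun _ => (1:ℝ)) (fun t ht => ?_),
          intervalIntegral.integral_const]
        · simp
          try ring
        · rw [Set.uIcc_of_le hL] at ht
          exact if_pos ht.2
      have hsnd : ∫ t in L..M, (if t ≤ L then (1:ℝ) else 0) = 0 := by
        rw [intervalIntegral.integral_congr_ae (g := fun _ => (0:ℝ))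
          (Filter.Eventually.of_forall fun t ht => ?_)]
        · simp
        · rw [Set.uIoc_of_le hLM.le] at ht
          exact if_neg (by push_neg; exact ht.1)
      rw [← hsplit, hfst, hsnd, min_eq_left hLM.le, max_eq_right hL]
      ring

theorem stmt13 : ∃ c : ℝ, 0 < c ∧ ∀ (n : ℕ) (f : (Fin n → Bool) → ℝ) (ε σ : ℝ),
    (∀ x, f x ∈ Set.Icc (0:ℝ) 1) → w1b n f = ε ^ 2 → bVar n f = σ ^ 2 → 0 < σ →
    ∃ B : Set (Fin n → Bool), IsHalfspaceB B ∧
      bCov n f (Set.indicator B 1) ≥ c * ε ^ 2 / σ := by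
  refine ⟨1/17, by norm_num, ?_⟩
  intro n f ε σ hf hw hv hσ
  by_cases hε : ε = 0
  · refine ⟨Set.univ, ⟨0, 0, by ext x; simp⟩, ?_⟩
    have h1 : Set.indicator (Set.univ : Set (Fin n → Bool)) (1 : (Fin n → Bool) → ℝ)
        = fun _ => 1 := by ext x; simp
    rw [h1]
    have h2 : bCov n f (fun _ => 1) = 0 := by
      rw [bCov_eq]
      have h3 : (fun x => (f x - bExp n f) * (1:ℝ)) = fun x => f x - bExp n f := by
        funext x; ring
      rw [h3, bExp_sub n f (fun _ => bExp n f), bExp_const]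
      ring
    rw [h2, hε]
    norm_num
  · set a : Fin n → ℝ := fun i => fourierCoef n f {i} with ha
    set ℓ : (Fin n → Bool) → ℝ := fun x => ∑ i, a i * bval (x i) with hℓ
    set W : ℝ := ε ^ 2 with hW
    have hW0 : 0 < W := lt_of_le_of_ne (sq_nonneg ε) (Ne.symm (pow_ne_zero 2 hε))
    set M : ℝ := 4 * σ with hM
    have hM0 : 0 < M := by rw [hM]; linarith
    have hsum_a : ∑ i, a i ^ 2 = W := by rw [← hw]; rfl
    have hEl : bExp n ℓ = 0 := by
      rw [hℓ, bExp_finset_sum n Finset.univ (fun i x => a i * bval (x i))]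
      apply Finset.sum_eq_zero
      intro i _
      have hp := sum_parity a ∅ 0 i (Finset.notMem_empty i)
      simp only [Finset.sum_empty, pow_zero, one_mul] at hp
      rw [bExp_const_mul, bExp, hp]
      simp
    have hEfl : bExp n (fun x => f x * ℓ x) = W := by
      have h1 : (fun x => f x * ℓ x) = fun x => ∑ i, a i * (f x * bval (x i)) := by
        funext x
        rw [hℓ, Finset.mul_sum]
        exact Finset.sum_congr rfl fun i _ => by ring
      rw [h1, bExp_finset_sum n Finset.univ (fun i x => a i * (f x * bval (x i)))]
      have h2 : ∀ i ∈ Finset.univ, bExp n (fun x => a i * (f x * bval (x i))) = a i ^ 2 := by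
        intro i _
        rw [bExp_const_mul]
        have h3 : bExp n (fun x => f x * bval (x i)) = a i := by
          rw [ha]
          simp only [fourierCoef, chi, Finset.prod_singleton]
        rw [h3]; ring
      rw [Finset.sum_congr rfl h2, hsum_a]
    set D : (Fin n → Bool) → ℝ := fun x => f x - bExp n f with hD
    have hED : bExp n D = 0 := by
      rw [hD, bExp_sub n f (fun _ => bExp n f), bExp_const]; ring
    have hED2 : bExp n (fun x => D x ^ 2) = σ ^ 2 := by
      rw [← hv, bVar, bCov]
      congr 1
      funext x
      rw [hD]; ring
    have hDl : bExp n (fun x => D x * ℓ x) = W := by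
      have h1 : (fun x => D x * ℓ x) = fun x => f x * ℓ x - bExp n f * ℓ x := by
        funext x; rw [hD]; ring
      rw [h1, bExp_sub, bExp_const_mul, hEl, hEfl]; ring
    have hEl4 : bExp n (fun x => ℓ x ^ 4) ≤ 3 * W ^ 2 := by
      rw [bExp, div_le_iff₀ (by positivity : (0:ℝ) < 2 ^ n)]
      calc ∑ x : Fin n → Bool, ℓ x ^ 4
          ≤ 2 ^ n * (3 * (∑ j, a j ^ 2) ^ 2) := quad_moment a Finset.univ
        _ = 3 * W ^ 2 * 2 ^ n := by rw [hsum_a]; ring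
    set h : (Fin n → Bool) → ℝ := fun x => max (-M) (min (ℓ x) M) with hh
    have herr2 : bExp n (fun x => (ℓ x - h x) ^ 2) ≤ 3 * W ^ 2 / M ^ 2 := by
      have h1 : bExp n (fun x => (ℓ x - h x) ^ 2)
          ≤ bExp n (fun x => (1 / M ^ 2) * ℓ x ^ 4) := by
        apply bExp_mono
        intro x
        have := clamp_err (u := ℓ x) hM0
        rw [hh]
        calc (ℓ x - max (-M) (min (ℓ x) M)) ^ 2 ≤ ℓ x ^ 4 / M ^ 2 := this
          _ = 1 / M ^ 2 * ℓ x ^ 4 := by ring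
      rw [bExp_const_mul] at h1
      calc bExp n (fun x => (ℓ x - h x) ^ 2) ≤ 1 / M ^ 2 * bExp n (fun x => ℓ x ^ 4) := h1
        _ ≤ 1 / M ^ 2 * (3 * W ^ 2) := by
            apply mul_le_mul_of_nonneg_left hEl4 (by positivity)
        _ = 3 * W ^ 2 / M ^ 2 := by ring
    have hkey : bExp n (fun x => D x * (ℓ x - h x)) ≤ W / 2 := by
      have hCS := bExp_CS n D (fun x => ℓ x - h x)
      rw [hED2] at hCS
      have h1 : σ ^ 2 * bExp n (fun x => (ℓ x - h x) ^ 2) ≤ σ ^ 2 * (3 * W ^ 2 / M ^ 2) :=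
        mul_le_mul_of_nonneg_left herr2 (sq_nonneg σ)
      have h2 : σ ^ 2 * (3 * W ^ 2 / M ^ 2) = 3 * W ^ 2 / 16 := by
        rw [hM]
        field_simp
        ring
      nlinarith [hCS, hW0]
    have hDh : W / 2 ≤ bExp n (fun x => D x * h x) := by
      have hsplit : bExp n (fun x => D x * h x)
          = bExp n (fun x => D x * ℓ x) - bExp n (fun x => D x * (ℓ x - h x)) := by
        rw [← bExp_sub]
        congr 1
        funext x; ring
      rw [hsplit, hDl]
      linarith
    set φ : ℝ → ℝ := fun t => bExp n (fun x => D x * (if t ≤ ℓ x then 1 else 0)) with hφ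
    have hφ_sum : φ = fun t => ∑ x : Fin n → Bool,
        (D x / 2 ^ n) * (if t ≤ ℓ x then (1:ℝ) else 0) := by
      funext t
      simp only [hφ]
      rw [bExp, Finset.sum_div]
      exact Finset.sum_congr rfl fun x _ => by ring
    have hInt : ∀ x : Fin n → Bool, IntervalIntegrable
        (fun t => (D x / 2 ^ n) * (if t ≤ ℓ x then (1:ℝ) else 0))
        MeasureTheory.volume (-M) M :=
      fun x => ((step_antitone (ℓ x)).intervalIntegrable).const_mul _
    have hφint : IntervalIntegrable φ MeasureTheory.volume (-M) M := by
      rw [hφ_sum, ← Finset.sum_fn]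
      exact IntervalIntegrable.sum Finset.univ fun x _ => hInt x
    have hIφ : ∫ t in (-M)..M, φ t = bExp n (fun x => D x * h x) := by
      simp only [hφ_sum]
      rw [intervalIntegral.integral_finset_sum (fun x _ => hInt x)]
      have h1 : ∀ x : Fin n → Bool,
          (∫ t in (-M)..M, (D x / 2 ^ n) * (if t ≤ ℓ x then (1:ℝ) else 0))
          = (D x / 2 ^ n) * (h x + M) := by
        intro x
        rw [intervalIntegral.integral_const_mul, step_integral hM0]
      rw [Finset.sum_congr rfl fun x _ => h1 x]
      have h2 : ∑ x : Fin n → Bool, (D x / 2 ^ n) * (h x + M)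
          = bExp n (fun x => D x * h x + M * D x) := by
        rw [bExp, Finset.sum_div]
        exact Finset.sum_congr rfl fun x _ => by ring
      rw [h2, bExp_add n (fun x => D x * h x) (fun x => M * D x), bExp_const_mul, hED]
      ring
    have hEx : ∃ t : ℝ, W / (17 * σ) ≤ φ t := by
      by_contra hc
      push_neg at hc
      have hmono := intervalIntegral.integral_mono_on (a := -M) (b := M)
        (by linarith) hφint intervalIntegrable_const (fun t _ => (hc t).le)
      rw [hIφ, intervalIntegral.integral_const, smul_eq_mul] at hmono
      have h3 : (M - -M) * (W / (17 * σ)) = 8 * W / 17 := by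
        rw [hM]
        field_simp
        ring
      rw [h3] at hmono
      nlinarith [hDh, hW0]
    obtain ⟨t, ht⟩ := hEx
    refine ⟨{x | t ≤ ℓ x}, ⟨fun i => -(a i), -t, ?_⟩, ?_⟩
    · ext x
      simp only [Set.mem_setOf_eq]
      have h4 : ∑ i, -(a i) * bval (x i) = - ℓ x := by
        rw [hℓ]
        simp only
        rw [← Finset.sum_neg_distrib]
        exact Finset.sum_congr rfl fun i _ => by ring
      rw [h4]
      constructor <;> intro <;> linarith
    · have hcov : φ t = bCov n f (Set.indicator {x | t ≤ ℓ x} 1) := by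
        rw [bCov_eq]
        simp only [hφ, hD]
        congr 1
      rw [ge_iff_le, ← hcov]
      have h5 : (1:ℝ)/17 * ε ^ 2 / σ = W / (17 * σ) := by
        rw [hW]; ring
      rw [h5]
      exact ht
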